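/- For the Shepard operator with exponent p > 2 and f : [−1,1] → ℝ Lipschitz continuous, there is a constant c (depending on p and the Lipschitz constant of f) such that max_{|x|≤1} |f(x) − R_n(f,x)| ≤ c/n for all n ≥ 1. -/

import Mathlib

/-!
Away from the nodes, `f x - R_n(f, x)` is a weighted mean of `f x - f (k/n)`, each bounded by
`L d_k` with `d_k = |x - k/n|`, so the error is at most `L ∑ d_k ^ (1-p) / ∑ d_k ^ (-p)`.
The nearest node has `d_j ≤ 1/(2n)`, and every other node has `d_k ≥ |k - j|/(2n)`; comparing
term by term with `d_j ^ (-p) ≥ (2n) ^ p` bounds this ratio by `(1 + ∑_{m ∈ ℤ} |m| ^ (1-p)) / (2n)`.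
-/

open Real Classical

/-- The Shepard operator with exponent `p` on `[-1,1]`, based on the
equidistant nodes `k/n`, `|k| ≤ n`, extended by the node values of `f`. -/
noncomputable def shepard (n : ℕ) (p : ℝ) (f : ℝ → ℝ) (x : ℝ) : ℝ :=
  if ∃ j : ℤ, |j| ≤ (n : ℤ) ∧ x = (j : ℝ) / n then f x
  else (∑ k ∈ Finset.Icc (-(n : ℤ)) (n : ℤ), f ((k : ℝ) / n) * |x - (k : ℝ) / n| ^ (-p)) /
    (∑ k ∈ Finset.Icc (-(n : ℤ)) (n : ℤ), |x - (k : ℝ) / n| ^ (-p))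

open Finset

theorem abs_sub_sum_mul_div_sum_le {ι : Type*} (s : Finset ι) (w b : ι → ℝ)
    (hw : ∀ i ∈ s, 0 ≤ w i) (hW : 0 < ∑ i ∈ s, w i) (a : ℝ) :
    |a - (∑ i ∈ s, b i * w i) / ∑ i ∈ s, w i| ≤ (∑ i ∈ s, |a - b i| * w i) / ∑ i ∈ s, w i := by
  have hmean : a - (∑ i ∈ s, b i * w i) / ∑ i ∈ s, w i
      = (∑ i ∈ s, (a - b i) * w i) / ∑ i ∈ s, w i := by
    simp only [sub_mul, sum_sub_distrib, ← mul_sum, sub_div, mul_div_cancel_right₀ _ hW.ne']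
  rw [hmean, abs_div, abs_of_pos hW]
  gcongr
  calc |∑ i ∈ s, (a - b i) * w i| ≤ ∑ i ∈ s, |(a - b i) * w i| := abs_sum_le_sum_abs _ _
    _ = ∑ i ∈ s, |a - b i| * w i :=
      sum_congr rfl fun i hi => by rw [abs_mul, abs_of_nonneg (hw i hi)]

theorem sum_abs_sub_rpow_le_tsum {q : ℝ} (hq : q < -1) (s : Finset ℤ) (j : ℤ) :
    ∑ k ∈ s, |(k : ℝ) - j| ^ q ≤ ∑' m : ℤ, |(m : ℝ)| ^ q := by
  have hg : Summable fun m : ℤ => |(m : ℝ)| ^ q := by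
    simpa using summable_abs_int_rpow (b := -q) (by linarith)
  have hshift := ((Equiv.subRight j).summable_iff.2 hg).sum_le_tsum s
    fun _ _ => rpow_nonneg (abs_nonneg _) _
  rw [(Equiv.subRight j).tsum_eq fun m : ℤ => |(m : ℝ)| ^ q] at hshift
  simpa using hshift

theorem rpow_one_sub_le_of_mul_le {p δ d d₀ m : ℝ} (hp : 1 ≤ p) (hd₀ : 0 < d₀) (hd₀δ : d₀ ≤ δ)
    (hm : 0 < m) (hmd : m * δ ≤ d) :
    d ^ (1 - p) ≤ δ * m ^ (1 - p) * d₀ ^ (-p) := by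
  have hδ : 0 < δ := hd₀.trans_le hd₀δ
  calc d ^ (1 - p) ≤ (m * δ) ^ (1 - p) := by
        apply rpow_le_rpow_of_nonpos (by positivity) hmd; linarith
    _ = δ * m ^ (1 - p) * δ ^ (-p) := by
      rw [mul_rpow hm.le hδ.le, show (1 : ℝ) - p = 1 + -p by ring, rpow_add hδ, rpow_one]; ring
    _ ≤ δ * m ^ (1 - p) * d₀ ^ (-p) :=
      mul_le_mul_of_nonneg_left (rpow_le_rpow_of_nonpos hd₀ hd₀δ (by linarith)) (by positivity)

/-- The nearest node `j` alone carries weight `d j ^ (-p) ≥ δ ^ (-p)`, which dominates the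
`δ`-rescaled tail `∑ |k - j| ^ (1 - p)`; summability of that tail is where `p > 2` enters. -/
theorem sum_rpow_one_sub_div_sum_rpow_neg_le {p δ : ℝ} (hp : 2 < p) {s : Finset ℤ}
    {d : ℤ → ℝ} {j : ℤ} (hj : j ∈ s) (hdj : 0 < d j) (hdjδ : d j ≤ δ)
    (hsep : ∀ k ∈ s, k ≠ j → |(k : ℝ) - j| * δ ≤ d k) :
    (∑ k ∈ s, d k ^ (1 - p)) / ∑ k ∈ s, d k ^ (-p) ≤ δ * (1 + ∑' m : ℤ, |(m : ℝ)| ^ (1 - p)) := by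
  set Z := ∑' m : ℤ, |(m : ℝ)| ^ (1 - p)
  have hZ : 0 ≤ Z := tsum_nonneg fun _ => by positivity
  have hδ : 0 < δ := hdj.trans_le hdjδ
  have hweight : d j ^ (-p) ≤ ∑ k ∈ s, d k ^ (-p) := by
    refine single_le_sum (fun k hk => rpow_nonneg ?_ _) hj
    rcases eq_or_ne k j with rfl | hkj
    · exact hdj.le
    · exact le_trans (by positivity) (hsep k hk hkj)
  have hnear : d j ^ (1 - p) ≤ δ * d j ^ (-p) := by
    rw [show (1 : ℝ) - p = 1 + -p by ring, rpow_add hdj, rpow_one]; gcongr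
  have htail : ∑ k ∈ s.erase j, d k ^ (1 - p) ≤ δ * Z * d j ^ (-p) := by
    calc ∑ k ∈ s.erase j, d k ^ (1 - p)
        ≤ ∑ k ∈ s.erase j, δ * |(k : ℝ) - j| ^ (1 - p) * d j ^ (-p) := by
          refine sum_le_sum fun k hk => ?_
          obtain ⟨hkj, hks⟩ := mem_erase.1 hk
          have hm : 0 < |(k : ℝ) - j| := abs_pos.2 (sub_ne_zero.2 (by exact_mod_cast hkj))
          exact rpow_one_sub_le_of_mul_le (by linarith) hdj hdjδ hm (hsep k hks hkj)
      _ = δ * (∑ k ∈ s.erase j, |(k : ℝ) - j| ^ (1 - p)) * d j ^ (-p) := by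
          rw [mul_sum, sum_mul]
      _ ≤ δ * Z * d j ^ (-p) := by
          gcongr; exact sum_abs_sub_rpow_le_tsum (by linarith) _ _
  rw [div_le_iff₀ ((rpow_pos_of_pos hdj _).trans_le hweight), ← add_sum_erase _ _ hj]
  calc d j ^ (1 - p) + ∑ k ∈ s.erase j, d k ^ (1 - p)
      ≤ δ * (1 + Z) * d j ^ (-p) := by linarith
    _ ≤ δ * (1 + Z) * ∑ k ∈ s, d k ^ (-p) := by gcongr

theorem exists_abs_sub_intCast_div_le {n : ℕ} (hn : 0 < n) {x : ℝ} (hx : |x| ≤ 1) :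
    ∃ j : ℤ, |j| ≤ n ∧ |x - j / n| ≤ 1 / (2 * n) := by
  have hn' : (0 : ℝ) < n := by exact_mod_cast hn
  have hround : |n * x - round (n * x)| ≤ 1 / 2 := abs_sub_round _
  refine ⟨round (n * x), ?_, ?_⟩
  · have hnx : |n * x| ≤ n := by rw [abs_mul, Nat.abs_cast]; exact mul_le_of_le_one_right hn'.le hx
    have hlt : |(round (n * x) : ℝ)| < n + 1 := by
      linarith [abs_sub_abs_le_abs_sub ((round (n * x) : ℤ) : ℝ) (n * x),
        abs_sub_comm (n * x) (round (n * x) : ℝ)]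
    have : |round (n * x)| < (n : ℤ) + 1 := by exact_mod_cast hlt
    omega
  · rw [show x - round (n * x) / n = (n * x - round (n * x)) / n by field_simp, abs_div,
      Nat.abs_cast, div_le_iff₀ hn']
    calc |n * x - round (n * x)| ≤ 1 / 2 := hround
      _ = 1 / (2 * n) * n := by field_simp

theorem abs_sub_intCast_mul_le_abs_sub_div {n : ℕ} (hn : 0 < n) {x : ℝ} {j k : ℤ}
    (hj : |x - j / n| ≤ 1 / (2 * n)) (hkj : k ≠ j) :
    |(k : ℝ) - j| * (1 / (2 * n)) ≤ |x - k / n| := by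
  have hn' : (0 : ℝ) < n := by exact_mod_cast hn
  have hone : (1 : ℝ) ≤ |(k : ℝ) - j| := by
    exact_mod_cast Int.one_le_abs (sub_ne_zero.2 hkj)
  have htri : |(k : ℝ) - j| / n ≤ |x - k / n| + |x - j / n| := by
    calc |(k : ℝ) - j| / n = |(k : ℝ) / n - j / n| := by rw [← sub_div, abs_div, Nat.abs_cast]
      _ ≤ |(k : ℝ) / n - x| + |x - j / n| := abs_sub_le _ _ _
      _ = |x - k / n| + |x - j / n| := by rw [abs_sub_comm _ x]
  have hhalf : |(k : ℝ) - j| / n = 2 * (|(k : ℝ) - j| * (1 / (2 * n))) := by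
    field_simp
  have hlower : 1 / (2 * n) ≤ |(k : ℝ) - j| * (1 / (2 * n)) := le_mul_of_one_le_left (by positivity) hone
  linarith

theorem intCast_div_mem_Icc {n : ℕ} {k : ℤ} (hk : |k| ≤ n) : (k : ℝ) / n ∈ Set.Icc (-1 : ℝ) 1 := by
  rw [Set.mem_Icc, ← abs_le, abs_div, Nat.abs_cast]
  exact div_le_one_of_le₀ (by exact_mod_cast hk) n.cast_nonneg

theorem abs_sub_shepard_le {n : ℕ} {p L : ℝ} {f : ℝ → ℝ}
    (hf : ∀ x ∈ Set.Icc (-1 : ℝ) 1, ∀ y ∈ Set.Icc (-1 : ℝ) 1, |f x - f y| ≤ L * |x - y|)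
    {x : ℝ} (hx : x ∈ Set.Icc (-1 : ℝ) 1) (hnode : ¬∃ j : ℤ, |j| ≤ (n : ℤ) ∧ x = j / n) :
    |f x - shepard n p f x| ≤ L * ((∑ k ∈ Icc (-(n : ℤ)) n, |x - k / n| ^ (1 - p)) /
      ∑ k ∈ Icc (-(n : ℤ)) n, |x - k / n| ^ (-p)) := by
  have hdist : ∀ k ∈ Icc (-(n : ℤ)) n, 0 < |x - k / n| := fun k hk =>
    abs_pos.2 (sub_ne_zero.2 fun h => hnode ⟨k, abs_le.2 (mem_Icc.1 hk), h⟩)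
  have hD : 0 < ∑ k ∈ Icc (-(n : ℤ)) n, |x - k / n| ^ (-p) :=
    sum_pos (fun k hk => rpow_pos_of_pos (hdist k hk) _) ⟨0, by simp⟩
  rw [shepard, if_neg hnode, mul_div_assoc', mul_sum]
  refine (abs_sub_sum_mul_div_sum_le _ _ _ (fun _ _ => by positivity) hD _).trans ?_
  gcongr ?_ / _
  refine sum_le_sum fun k hk => ?_
  calc |f x - f (k / n)| * |x - k / n| ^ (-p) ≤ L * |x - k / n| * |x - k / n| ^ (-p) := by
        gcongr; exact hf x hx _ (intCast_div_mem_Icc (abs_le.2 (mem_Icc.1 hk)))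
    _ = L * |x - k / n| ^ (1 - p) := by
        rw [mul_assoc, show (1 : ℝ) - p = 1 + -p by ring, rpow_add (hdist k hk), rpow_one]

/-- For `p > 2` and Lipschitz `f` on `[-1,1]`, there is a constant `c`
(depending only on `p` and the Lipschitz constant `L`) such that
`max_{|x|≤1} |f(x) - R_n(f,x)| ≤ c/n` for all `n ≥ 1`. -/
theorem shepard_lipschitz_rate (p : ℝ) (hp : 2 < p) (L : ℝ) :
    ∃ c : ℝ, ∀ f : ℝ → ℝ,
      (∀ x ∈ Set.Icc (-1 : ℝ) 1, ∀ y ∈ Set.Icc (-1 : ℝ) 1, |f x - f y| ≤ L * |x - y|) →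
      ∀ n : ℕ, 1 ≤ n → ∀ x ∈ Set.Icc (-1 : ℝ) 1,
        |f x - shepard n p f x| ≤ c / n := by
  set Z := ∑' m : ℤ, |(m : ℝ)| ^ (1 - p)
  refine ⟨L * (1 + Z) / 2, fun f hf n hn x hx => ?_⟩
  have hL : 0 ≤ L := (abs_nonneg _).trans (by simpa using hf 1 (by norm_num) 0 (by norm_num))
  by_cases hnode : ∃ j : ℤ, |j| ≤ (n : ℤ) ∧ x = j / n
  · rw [shepard, if_pos hnode, sub_self, abs_zero]; positivity
  obtain ⟨j, hjn, hxj⟩ := exists_abs_sub_intCast_div_le hn (abs_le.2 hx)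
  have hxj' : 0 < |x - j / n| := abs_pos.2 (sub_ne_zero.2 fun h => hnode ⟨j, hjn, h⟩)
  have hratio := sum_rpow_one_sub_div_sum_rpow_neg_le hp (mem_Icc.2 (abs_le.1 hjn)) hxj' hxj
    fun k _ hkj => abs_sub_intCast_mul_le_abs_sub_div hn hxj hkj
  calc |f x - shepard n p f x| ≤ L * (1 / (2 * n) * (1 + Z)) :=
        (abs_sub_shepard_le hf hx hnode).trans (by gcongr)
    _ = L * (1 + Z) / 2 / n := by ring
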